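/- arXiv:1707.07320 — 5 statements merged into one kernel-verified Lean document; each statement's English description precedes it below -/
import Mathlib

section
/- Every tree T ⊆ ω₁^{<ω} with the property that for every s ∈ T the restricted tree T↾ₛ is uncountable, contains a wide subtree S ⊆ T. -/
noncomputable section

/-- The type of countable ordinals, i.e. `ω₁` as a linearly ordered type. -/
abbrev W1 : Type := (Cardinal.aleph 1).ord.ToType

/-- A tree: a set of strings (finite sequences of countable ordinals)
closed under initial segments. -/
def IsTree (T : Set (List W1)) : Prop := ∀ s ∈ T, ∀ t : List W1, t <+: s → t ∈ T

/-- The set of immediate successors of `s` in `T`. -/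
def succs (T : Set (List W1)) (s : List W1) : Set (List W1) :=
  {t ∈ T | s <+: t ∧ t.length = s.length + 1}

/-- Branching nodes of `T`: nodes with at least two immediate successors. -/
def BN (T : Set (List W1)) : Set (List W1) :=
  {s ∈ T | 2 ≤ Cardinal.mk ↥(succs T s)}

/-- Branching nodes of `T` lying strictly below `s`. -/
def belowBN (T : Set (List W1)) (s : List W1) : Set (List W1) :=
  {u ∈ BN T | u <+: s ∧ u ≠ s}

/-- `BN_n(T)`: branching nodes with exactly `n` branching nodes strictly below. -/
def BNn (T : Set (List W1)) (n : ℕ) : Set (List W1) :=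
  {s ∈ BN T | (belowBN T s).Finite ∧ (belowBN T s).ncard = n}

/-- The restricted tree `T↾ₛ`. -/
def restr (T : Set (List W1)) (s : List W1) : Set (List W1) :=
  {t ∈ T | s <+: t ∨ t <+: s}

/-- A wide tree: nonempty tree, every node extends to a branching node,
and every branching node has `ℵ₁`-many immediate successors. -/
def Wide (T : Set (List W1)) : Prop :=
  T.Nonempty ∧ IsTree T ∧ (∀ s ∈ T, ∃ t ∈ BN T, s <+: t) ∧
    ∀ s ∈ BN T, Cardinal.mk ↥(succs T s) = Cardinal.aleph 1

/-- The initial segment `x↾m` of an infinite sequence. -/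
def seg (x : ℕ → W1) (m : ℕ) : List W1 := List.ofFn (fun i : Fin m => x i.1)

/-- `[T]`: the set of infinite branches of `T`. -/
def branches (T : Set (List W1)) : Set (ℕ → W1) := {x | ∀ m, seg x m ∈ T}

/-- `S ⊆_n T` : `BN_n(T) ⊆ S ⊆ T`. -/
def SubN (S T : Set (List W1)) (n : ℕ) : Prop := BNn T n ⊆ S ∧ S ⊆ T

/-- `S ⊆'_n T` : `S ⊆ T` and `BN_{n-1}(S) = BN_{n-1}(T)` (just `⊆` when `n = 0`). -/
def SubN' (S T : Set (List W1)) (n : ℕ) : Prop :=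
  S ⊆ T ∧ ∀ m : ℕ, n = m + 1 → BNn S m = BNn T m

/-!
If no node above `s` had `ℵ₁` immediate successors, every node of the cone above `s` would have
countably many successors, so the cone, and with it `T↾ₛ`, would be countable. Hence every node `s`
has an extension `c s` with `ℵ₁` successors. Taking `c s` least in a fixed well-order of all
strings makes the choice coherent: `c p = c s` whenever `s ⊆ p ⊆ c s`. The wide subtree keeps all
successors of the nodes with `ℵ₁` successors and, above any other node `p`, only the successor
leading towards `c p`; coherence makes `c s` a node of it, and it branches there.
-/

open Cardinal

theorem exists_coherent_choice {α β : Type*} [Nonempty β] (E : α → Set β) :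
    ∃ c : α → β, ∀ a, (E a).Nonempty →
      c a ∈ E a ∧ ∀ b, E b ⊆ E a → c a ∈ E b → c b = c a := by
  classical
  have wf : WellFounded (@WellOrderingRel β) := IsWellFounded.wf
  refine ⟨fun a => if h : (E a).Nonempty then wf.min (E a) h else Classical.arbitrary β,
    fun a ha => ?_⟩
  simp only [dif_pos ha]
  refine ⟨wf.min_mem _ ha, fun b hba hab => ?_⟩
  have hb : (E b).Nonempty := ⟨_, hab⟩
  simp only [dif_pos hb]
  rcases trichotomous_of WellOrderingRel (wf.min (E b) hb) (wf.min (E a) ha) with h | h | h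
  · exact absurd h (wf.not_lt_min _ (hba (wf.min_mem _ hb)))
  · exact h
  · exact absurd h (wf.not_lt_min _ hab)

def wideNodes (T : Set (List W1)) : Set (List W1) := {u ∈ T | ℵ₁ ≤ #(succs T u)}

section Successors

variable {T : Set (List W1)}

lemma mem_succs_iff {t r : List W1} : r ∈ succs T t ↔ r ∈ T ∧ ∃ x, r = t ++ [x] := by
  constructor
  · rintro ⟨hr, ⟨d, rfl⟩, hlen⟩
    obtain ⟨x, rfl⟩ := List.length_eq_one_iff.mp (by simpa using hlen)
    exact ⟨hr, x, rfl⟩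
  · rintro ⟨hr, x, rfl⟩
    exact ⟨hr, List.prefix_append _ _, by simp⟩

lemma mk_succs_le_aleph_one (t : List W1) : #(succs T t) ≤ ℵ₁ := by
  have hsub : succs T t ⊆ Set.range (fun x : W1 => t ++ [x]) := fun r hr => by
    obtain ⟨_, x, rfl⟩ := mem_succs_iff.mp hr
    exact ⟨x, rfl⟩
  calc #(succs T t) ≤ #(Set.range (fun x : W1 => t ++ [x])) := mk_le_mk_of_subset hsub
    _ ≤ #W1 := mk_range_le
    _ = ℵ₁ := mk_ord_toType _

lemma countable_cone (hT : IsTree T) {s : List W1}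
    (h : ∀ u ∈ T, s <+: u → (succs T u).Countable) : {t ∈ T | s <+: t}.Countable := by
  let level (n : ℕ) : Set (List W1) := {t ∈ T | s <+: t ∧ t.length = s.length + n}
  have hlevel : ∀ n, (level n).Countable := by
    intro n
    induction n with
    | zero =>
      refine (Set.countable_singleton s).mono fun t ⟨_, hst, hlen⟩ => ?_
      exact (hst.eq_of_length hlen.symm).symm
    | succ n ih =>
      refine (ih.biUnion fun u hu => h u hu.1 hu.2.1).mono fun t ⟨ht, hst, hlen⟩ => ?_
      have hne : t ≠ [] := List.ne_nil_of_length_pos (by omega)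
      have hdrop : s <+: t.dropLast :=
        List.prefix_of_prefix_length_le hst t.dropLast_prefix (by simp; omega)
      refine Set.mem_biUnion ⟨hT t ht _ t.dropLast_prefix, hdrop, by simp; omega⟩ ?_
      exact mem_succs_iff.mpr ⟨ht, _, (List.dropLast_concat_getLast hne).symm⟩
  refine (Set.countable_iUnion hlevel).mono fun t ⟨ht, hst⟩ => ?_
  exact Set.mem_iUnion.mpr ⟨t.length - s.length, ht, hst, by have := hst.length_le; omega⟩

lemma exists_mem_wideNodes_extension (hT : IsTree T) {s : List W1}
    (h : ¬ (restr T s).Countable) : ∃ u ∈ wideNodes T, s <+: u := by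
  by_contra! hnone
  have hsuccs : ∀ u ∈ T, s <+: u → (succs T u).Countable := fun u hu hsu => by
    rw [← le_aleph0_iff_set_countable, ← lt_aleph_one_iff]
    exact lt_of_not_ge fun hge => hnone u ⟨hu, hge⟩ hsu
  have hinits : {t : List W1 | t <+: s}.Countable :=
    (s.inits.finite_toSet.subset fun t ht => (List.mem_inits t s).mpr ht).countable
  refine h (((countable_cone hT hsuccs).union hinits).mono ?_)
  rintro t ⟨ht, hst | hts⟩
  exacts [Or.inl ⟨ht, hst⟩, Or.inr hts]

end Successors

def prunedTree (T : Set (List W1)) (c : List W1 → List W1) : Set (List W1) :=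
  {s ∈ T | ∀ p a, p ++ [a] <+: s → p ∈ wideNodes T ∨ p ++ [a] <+: c p}

section PrunedTree

variable {T : Set (List W1)} {c : List W1 → List W1}

lemma prunedTree_subset : prunedTree T c ⊆ T := fun _ hs => hs.1

lemma isTree_prunedTree (hT : IsTree T) : IsTree (prunedTree T c) :=
  fun s hs t hts => ⟨hT s hs.1 t hts, fun p a hpt => hs.2 p a (hpt.trans hts)⟩

lemma nil_mem_prunedTree (hnil : [] ∈ T) : [] ∈ prunedTree T c :=
  ⟨hnil, fun p a h => by simpa using h.length_le⟩

lemma succs_prunedTree_of_mem_wideNodes {p : List W1} (hp : p ∈ prunedTree T c)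
    (hw : p ∈ wideNodes T) : succs (prunedTree T c) p = succs T p := by
  ext r
  simp only [mem_succs_iff]
  refine ⟨fun ⟨hr, hx⟩ => ⟨hr.1, hx⟩, ?_⟩
  rintro ⟨hr, x, rfl⟩
  refine ⟨⟨hr, fun q a hq => ?_⟩, x, rfl⟩
  rcases List.prefix_concat_iff.mp hq with heq | hqp
  · obtain ⟨rfl, -⟩ := List.append_inj' heq rfl
    exact Or.inl hw
  · exact hp.2 q a hqp

lemma succs_prunedTree_subsingleton {p : List W1} (hw : p ∉ wideNodes T) :
    (succs (prunedTree T c) p).Subsingleton := by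
  intro r hr r' hr'
  obtain ⟨hrS, x, rfl⟩ := mem_succs_iff.mp hr
  obtain ⟨hrS', x', rfl⟩ := mem_succs_iff.mp hr'
  have hx := (hrS.2 p x List.prefix_rfl).resolve_left hw
  have hx' := (hrS'.2 p x' List.prefix_rfl).resolve_left hw
  exact (List.prefix_of_prefix_length_le hx hx' (by simp)).eq_of_length (by simp)

lemma mem_BN_prunedTree_iff {p : List W1} :
    p ∈ BN (prunedTree T c) ↔ p ∈ prunedTree T c ∧ p ∈ wideNodes T := by
  refine ⟨fun ⟨hp, h2⟩ => ⟨hp, by_contra fun hw => ?_⟩, fun ⟨hp, hw⟩ => ⟨hp, ?_⟩⟩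
  · have h1 := mk_le_one_iff_set_subsingleton.mpr (succs_prunedTree_subsingleton (c := c) hw)
    exact absurd (h2.trans h1) (by norm_num)
  · rw [succs_prunedTree_of_mem_wideNodes hp hw]
    exact (natCast_lt_aleph0 (n := 2)).le.trans (aleph0_lt_aleph_one.le.trans hw.2)

lemma choice_mem_prunedTree
    (hcoh : ∀ s ∈ T, ∀ p, s <+: p → p <+: c s → c p = c s) {s : List W1}
    (hs : s ∈ prunedTree T c) (hcT : c s ∈ T) (hsc : s <+: c s) : c s ∈ prunedTree T c := by
  refine ⟨hcT, fun q a hq => ?_⟩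
  by_cases hqs : q ++ [a] <+: s
  · exact hs.2 q a hqs
  have hsq : s <+: q := List.prefix_of_prefix_length_le hsc ((List.prefix_append q [a]).trans hq)
    (by by_contra! hlt; exact hqs (List.prefix_of_prefix_length_le hq hsc (by simp; omega)))
  right
  rwa [hcoh s hs.1 q hsq ((List.prefix_append q [a]).trans hq)]

theorem wide_prunedTree (hT : IsTree T) (hnil : [] ∈ T)
    (hext : ∀ s ∈ T, c s ∈ wideNodes T ∧ s <+: c s)
    (hcoh : ∀ s ∈ T, ∀ p, s <+: p → p <+: c s → c p = c s) : Wide (prunedTree T c) := by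
  refine ⟨⟨[], nil_mem_prunedTree hnil⟩, isTree_prunedTree hT, fun s hs => ?_, fun p hp => ?_⟩
  · obtain ⟨hw, hsc⟩ := hext s hs.1
    exact ⟨c s, mem_BN_prunedTree_iff.mpr ⟨choice_mem_prunedTree hcoh hs hw.1 hsc, hw⟩, hsc⟩
  · obtain ⟨hp, hw⟩ := mem_BN_prunedTree_iff.mp hp
    rw [succs_prunedTree_of_mem_wideNodes hp hw]
    exact (mk_succs_le_aleph_one p).antisymm hw.2

end PrunedTree

/-- every (nonempty) tree all of whose restrictions are uncountable
contains a wide subtree. -/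
theorem stmt1 (T : Set (List W1)) (hT : IsTree T) (hne : T.Nonempty)
    (h : ∀ s ∈ T, ¬ (restr T s).Countable) :
    ∃ S : Set (List W1), Wide S ∧ S ⊆ T := by
  obtain ⟨c, hc⟩ := exists_coherent_choice fun s => {u ∈ wideNodes T | s <+: u}
  have hE (s) (hs : s ∈ T) := hc s (exists_mem_wideNodes_extension hT (h s hs))
  have hext : ∀ s ∈ T, c s ∈ wideNodes T ∧ s <+: c s := fun s hs => (hE s hs).1
  have hcoh : ∀ s ∈ T, ∀ p, s <+: p → p <+: c s → c p = c s := fun s hs p hsp hpc =>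
    (hE s hs).2 p (fun u hu => ⟨hu.1, hsp.trans hu.2⟩) ⟨(hext s hs).1, hpc⟩
  obtain ⟨t, ht⟩ := hne
  have hnil : [] ∈ T := hT t ht [] List.nil_prefix
  exact ⟨prunedTree T c, wide_prunedTree hT hnil hext hcoh, prunedTree_subset⟩
end
end

section
/- Let T be a wide tree and n < ω. Suppose for every u ∈ BN_n(T) a wide tree T_u ⊆ T↾_u is given. Then S = ⋃_{u ∈ BN_n(T)} T_u is a wide tree satisfying S ⊆_n T and S↾_u = T_u for all u ∈ BN_n(T). -/
noncomputable section

/-!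
Distinct nodes of `BN_n(T)` are incomparable, so the trees `T_u` live in pairwise disjoint cones
above their roots `u`, and above `u` the glued tree `S` coincides with `T_u`. Below the level
`BN_n(T)` nothing is lost: a node of `T` with `k ≤ n` branching nodes below it extends, by
passing through the next branching node `n - k` times, to some `w ∈ BN_n(T)`, and so lies in
`T_w`. Hence a branching node of `S` strictly below some `u ∈ BN_n(T)` has in `S` all its
`ℵ₁` successors from `T`.
-/

namespace List

variable {α : Type*}

theorem IsPrefix.length_lt_of_ne {u s : List α} (h : u <+: s) (hne : u ≠ s) :
    u.length < s.length :=
  lt_of_le_of_ne h.length_le fun hl => hne (h.eq_of_length hl)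

theorem finite_setOf_prefix (s : List α) : {u | u <+: s}.Finite := by
  simpa only [List.mem_inits] using s.inits.finite_toSet

theorem prefix_and_ne_iff_prefix_of_length_eq_succ {s t u : List α} (hst : s <+: t)
    (hlen : t.length = s.length + 1) : u <+: t ∧ u ≠ t ↔ u <+: s := by
  constructor
  · rintro ⟨hut, hne⟩
    exact prefix_of_prefix_length_le hut hst (by have := hut.length_lt_of_ne hne; omega)
  · intro hus
    refine ⟨hus.trans hst, ?_⟩
    rintro rfl
    have := hus.length_le
    omega

end List

theorem belowBN_finite (T : Set (List W1)) (s : List W1) : (belowBN T s).Finite :=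
  (List.finite_setOf_prefix s).subset fun _ hu => hu.2.1

theorem succs_nonempty_of_mem_BN {T : Set (List W1)} {s : List W1} (hs : s ∈ BN T) :
    (succs T s).Nonempty := by
  rw [← Set.nonempty_coe_sort, ← Cardinal.mk_ne_zero_iff]
  intro h
  have h2 := hs.2
  rw [h] at h2
  norm_num at h2

theorem belowBN_of_mem_succs {T : Set (List W1)} {s t : List W1} (ht : t ∈ succs T s) :
    belowBN T t = {u ∈ BN T | u <+: s} := by
  ext u
  exact and_congr_right' (List.prefix_and_ne_iff_prefix_of_length_eq_succ ht.2.1 ht.2.2)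

theorem setOf_mem_BN_prefix_eq_insert {T : Set (List W1)} {v : List W1} (hv : v ∈ BN T) :
    {u ∈ BN T | u <+: v} = insert v (belowBN T v) := by
  ext u
  simp only [belowBN, Set.mem_insert_iff, Set.mem_sep_iff]
  by_cases huv : u = v
  · subst huv
    simp [hv]
  · tauto

theorem eq_of_mem_BNn_of_prefix {T : Set (List W1)} {n : ℕ} {u v : List W1}
    (hu : u ∈ BNn T n) (hv : v ∈ BNn T n) (huv : u <+: v) : u = v := by
  by_contra hne
  have hsub : insert u (belowBN T u) ⊆ belowBN T v := by
    rintro x (rfl | ⟨hx, hxu, hxne⟩)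
    · exact ⟨hu.1, huv, hne⟩
    · exact ⟨hx, hxu.trans huv, fun h => hxne (h ▸ (huv.eq_of_length_le (h ▸ hxu.length_le)).symm)⟩
  have hcard := Set.ncard_le_ncard hsub hv.2.1
  rw [Set.ncard_insert_of_notMem (fun h => h.2.2 rfl) hu.2.1, hu.2.2, hv.2.2] at hcard
  omega

theorem eq_of_mem_BNn_of_prefix_of_mem_restr {T : Set (List W1)} {n : ℕ} {u v t : List W1}
    (hu : u ∈ BNn T n) (hv : v ∈ BNn T n) (hut : u <+: t) (ht : t ∈ restr T v) : u = v := by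
  rcases ht.2 with hvt | htv
  · rcases List.prefix_or_prefix_of_prefix hut hvt with huv | hvu
    · exact eq_of_mem_BNn_of_prefix hu hv huv
    · exact (eq_of_mem_BNn_of_prefix hv hu hvu).symm
  · exact eq_of_mem_BNn_of_prefix hu hv (hut.trans htv)

namespace Wide

variable {T : Set (List W1)}

theorem nil_mem (hT : Wide T) : [] ∈ T := by
  obtain ⟨x, hx⟩ := hT.1
  exact hT.2.1 x hx [] List.nil_prefix

theorem exists_BN_prefix_belowBN_eq (hT : Wide T) {s : List W1} (hs : s ∈ T) :
    ∃ v ∈ BN T, s <+: v ∧ belowBN T v = belowBN T s := by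
  obtain ⟨w, hw, hsw⟩ := hT.2.2.1 s hs
  set D := {u | u ∈ BN T ∧ s <+: u ∧ u <+: w}
  have hDfin : D.Finite := (List.finite_setOf_prefix w).subset fun u hu => hu.2.2
  obtain ⟨v, ⟨hv, hsv, hvw⟩, hmin⟩ :=
    Set.exists_min_image D List.length hDfin ⟨w, hw, hsw, List.prefix_refl w⟩
  refine ⟨v, hv, hsv, Set.ext fun u => ⟨?_, ?_⟩⟩
  · rintro ⟨hu, huv, hne⟩
    have hsu : ¬ s <+: u := fun hsu => by
      have := hmin u ⟨hu, hsu, huv.trans hvw⟩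
      have := huv.length_lt_of_ne hne
      omega
    have hus : u <+: s := (List.prefix_or_prefix_of_prefix huv hsv).resolve_right hsu
    exact ⟨hu, hus, fun h => hsu (h ▸ List.prefix_refl u)⟩
  · rintro ⟨hu, hus, hne⟩
    refine ⟨hu, hus.trans hsv, ?_⟩
    rintro rfl
    exact hne (hus.eq_of_length_le hsv.length_le)

theorem exists_BNn_prefix (hT : Wide T) {n : ℕ} {s : List W1} (hs : s ∈ T)
    (h : (belowBN T s).ncard ≤ n) : ∃ v ∈ BNn T n, s <+: v := by
  obtain ⟨k, hk⟩ := Nat.exists_eq_add_of_le h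
  induction k generalizing s with
  | zero =>
    obtain ⟨v, hv, hsv, hbe⟩ := hT.exists_BN_prefix_belowBN_eq hs
    exact ⟨v, ⟨hv, hbe ▸ belowBN_finite T s, by rw [hbe]; omega⟩, hsv⟩
  | succ k ih =>
    obtain ⟨v, hv, hsv, hbe⟩ := hT.exists_BN_prefix_belowBN_eq hs
    obtain ⟨t, ht⟩ := succs_nonempty_of_mem_BN hv
    have hcard : (belowBN T t).ncard = (belowBN T s).ncard + 1 := by
      rw [belowBN_of_mem_succs ht, setOf_mem_BN_prefix_eq_insert hv,
        Set.ncard_insert_of_notMem (fun h => h.2.2 rfl) (belowBN_finite T v), hbe]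
    obtain ⟨w, hw, htw⟩ := ih ht.1 (by omega) (by omega)
    exact ⟨w, hw, hsv.trans (ht.2.1.trans htw)⟩

end Wide

section SubsetRestr

variable {A T : Set (List W1)} {u : List W1}

theorem succs_subsingleton_of_subset_restr (hA : A ⊆ restr T u) {s : List W1} (hsu : s <+: u)
    (hne : s ≠ u) : (succs A s).Subsingleton := by
  have hlt := hsu.length_lt_of_ne hne
  have prefix_u : ∀ t ∈ succs A s, t <+: u := by
    rintro t ⟨htA, -, hlen⟩
    rcases (hA htA).2 with hut | htu
    · rw [hut.eq_of_length_le (by omega)]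
    · exact htu
  intro t₁ h₁ t₂ h₂
  have hlen : t₁.length = t₂.length := by rw [h₁.2.2, h₂.2.2]
  exact (List.prefix_of_prefix_length_le (prefix_u t₁ h₁) (prefix_u t₂ h₂) hlen.le).eq_of_length
    hlen

theorem prefix_of_mem_BN_of_subset_restr (hA : A ⊆ restr T u) {s : List W1} (hs : s ∈ BN A) :
    u <+: s := by
  rcases (hA hs.1).2 with hus | hsu
  · exact hus
  by_cases hne : s = u
  · rw [hne]
  have h2 := hs.2.trans (Cardinal.mk_le_one_iff_set_subsingleton.mpr
    (succs_subsingleton_of_subset_restr hA hsu hne))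
  norm_num at h2

theorem Wide.mem_of_subset_restr (hA : Wide A) (hAT : A ⊆ restr T u) : u ∈ A := by
  obtain ⟨x, hx⟩ := hA.1
  obtain ⟨s, hs, -⟩ := hA.2.2.1 x hx
  exact hA.2.1 s hs.1 u (prefix_of_mem_BN_of_subset_restr hAT hs)

end SubsetRestr

def glue (T : Set (List W1)) (n : ℕ) (Tu : List W1 → Set (List W1)) : Set (List W1) :=
  ⋃ u ∈ BNn T n, Tu u

section Glue

variable {T : Set (List W1)} {n : ℕ} {Tu : List W1 → Set (List W1)}

theorem mem_glue {t : List W1} : t ∈ glue T n Tu ↔ ∃ u ∈ BNn T n, t ∈ Tu u := by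
  simp only [glue, Set.mem_iUnion, exists_prop]

theorem glue_subset (hSub : ∀ u ∈ BNn T n, Tu u ⊆ restr T u) : glue T n Tu ⊆ T := by
  intro t ht
  obtain ⟨u, hu, htu⟩ := mem_glue.mp ht
  exact (hSub u hu htu).1

theorem BNn_subset_glue (hWide : ∀ u ∈ BNn T n, Wide (Tu u))
    (hSub : ∀ u ∈ BNn T n, Tu u ⊆ restr T u) : BNn T n ⊆ glue T n Tu :=
  fun u hu => mem_glue.mpr ⟨u, hu, (hWide u hu).mem_of_subset_restr (hSub u hu)⟩

theorem isTree_glue (hWide : ∀ u ∈ BNn T n, Wide (Tu u)) : IsTree (glue T n Tu) := by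
  intro s hs t hts
  obtain ⟨u, hu, hsu⟩ := mem_glue.mp hs
  exact mem_glue.mpr ⟨u, hu, (hWide u hu).2.1 s hsu t hts⟩

theorem mem_of_mem_glue_of_prefix (hSub : ∀ u ∈ BNn T n, Tu u ⊆ restr T u) {u t : List W1}
    (hu : u ∈ BNn T n) (hut : u <+: t) (ht : t ∈ glue T n Tu) : t ∈ Tu u := by
  obtain ⟨v, hv, htv⟩ := mem_glue.mp ht
  obtain rfl := eq_of_mem_BNn_of_prefix_of_mem_restr hu hv hut (hSub v hv htv)
  exact htv

theorem restr_glue (hWide : ∀ u ∈ BNn T n, Wide (Tu u))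
    (hSub : ∀ u ∈ BNn T n, Tu u ⊆ restr T u) {u : List W1} (hu : u ∈ BNn T n) :
    restr (glue T n Tu) u = Tu u := by
  ext t
  constructor
  · rintro ⟨ht, hut | htu⟩
    · exact mem_of_mem_glue_of_prefix hSub hu hut ht
    · exact (hWide u hu).2.1 u ((hWide u hu).mem_of_subset_restr (hSub u hu)) t htu
  · intro ht
    exact ⟨mem_glue.mpr ⟨u, hu, ht⟩, (hSub u hu ht).2⟩

theorem succs_glue_of_prefix (hSub : ∀ u ∈ BNn T n, Tu u ⊆ restr T u) {u t : List W1}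
    (hu : u ∈ BNn T n) (hut : u <+: t) : succs (glue T n Tu) t = succs (Tu u) t := by
  ext t'
  constructor
  · rintro ⟨ht', htt', hlen⟩
    exact ⟨mem_of_mem_glue_of_prefix hSub hu (hut.trans htt') ht', htt', hlen⟩
  · rintro ⟨ht', htt', hlen⟩
    exact ⟨mem_glue.mpr ⟨u, hu, ht'⟩, htt', hlen⟩

theorem BN_subset_BN_glue (hSub : ∀ u ∈ BNn T n, Tu u ⊆ restr T u) {u : List W1}
    (hu : u ∈ BNn T n) : BN (Tu u) ⊆ BN (glue T n Tu) := by
  intro s hs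
  refine ⟨mem_glue.mpr ⟨u, hu, hs.1⟩, ?_⟩
  rw [succs_glue_of_prefix hSub hu (prefix_of_mem_BN_of_subset_restr (hSub u hu) hs)]
  exact hs.2

theorem exists_BN_glue_prefix (hWide : ∀ u ∈ BNn T n, Wide (Tu u))
    (hSub : ∀ u ∈ BNn T n, Tu u ⊆ restr T u) {t : List W1} (ht : t ∈ glue T n Tu) :
    ∃ s ∈ BN (glue T n Tu), t <+: s := by
  obtain ⟨u, hu, htu⟩ := mem_glue.mp ht
  obtain ⟨s, hs, hts⟩ := (hWide u hu).2.2.1 t htu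
  exact ⟨s, BN_subset_BN_glue hSub hu hs, hts⟩

theorem mem_glue_of_ncard_belowBN_le (hT : Wide T) (hWide : ∀ u ∈ BNn T n, Wide (Tu u))
    (hSub : ∀ u ∈ BNn T n, Tu u ⊆ restr T u) {t : List W1} (ht : t ∈ T)
    (h : (belowBN T t).ncard ≤ n) : t ∈ glue T n Tu := by
  obtain ⟨w, hw, htw⟩ := hT.exists_BNn_prefix ht h
  exact isTree_glue hWide w (BNn_subset_glue hWide hSub hw) t htw

theorem succs_glue_of_prefix_of_ne (hT : Wide T) (hWide : ∀ u ∈ BNn T n, Wide (Tu u))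
    (hSub : ∀ u ∈ BNn T n, Tu u ⊆ restr T u) {s v : List W1} (hv : v ∈ BNn T n) (hsv : s <+: v)
    (hne : s ≠ v) : succs (glue T n Tu) s = succs T s := by
  refine Set.Subset.antisymm (fun t ht => ⟨glue_subset hSub ht.1, ht.2⟩) fun t ht => ?_
  have hbelow : belowBN T t ⊆ belowBN T v := by
    rw [belowBN_of_mem_succs ht]
    rintro x ⟨hx, hxs⟩
    refine ⟨hx, hxs.trans hsv, ?_⟩
    rintro rfl
    exact hne (hsv.eq_of_length_le hxs.length_le)
  have hle : (belowBN T t).ncard ≤ n := hv.2.2 ▸ Set.ncard_le_ncard hbelow hv.2.1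
  exact ⟨mem_glue_of_ncard_belowBN_le hT hWide hSub ht.1 hle, ht.2⟩

theorem card_succs_glue (hT : Wide T) (hWide : ∀ u ∈ BNn T n, Wide (Tu u))
    (hSub : ∀ u ∈ BNn T n, Tu u ⊆ restr T u) {s : List W1} (hs : s ∈ BN (glue T n Tu)) :
    Cardinal.mk ↥(succs (glue T n Tu) s) = Cardinal.aleph 1 := by
  obtain ⟨v, hv, hsv⟩ := mem_glue.mp hs.1
  by_cases hvs : v <+: s
  · have h2 := hs.2
    rw [succs_glue_of_prefix hSub hv hvs] at h2 ⊢
    exact (hWide v hv).2.2.2 s ⟨hsv, h2⟩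
  · have hsv' : s <+: v := (hSub v hv hsv).2.resolve_left hvs
    have hne : s ≠ v := fun h => hvs (h ▸ List.prefix_refl s)
    have h2 := hs.2
    rw [succs_glue_of_prefix_of_ne hT hWide hSub hv hsv' hne] at h2 ⊢
    exact hT.2.2.2 s ⟨glue_subset hSub hs.1, h2⟩

theorem wide_glue (hT : Wide T) (hWide : ∀ u ∈ BNn T n, Wide (Tu u))
    (hSub : ∀ u ∈ BNn T n, Tu u ⊆ restr T u) : Wide (glue T n Tu) := by
  have hnil : belowBN T [] = ∅ :=
    Set.eq_empty_of_forall_notMem fun u hu => hu.2.2 (List.prefix_nil.mp hu.2.1)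
  refine ⟨⟨[], mem_glue_of_ncard_belowBN_le hT hWide hSub hT.nil_mem ?_⟩, isTree_glue hWide,
    fun t ht => exists_BN_glue_prefix hWide hSub ht, fun s hs => card_succs_glue hT hWide hSub hs⟩
  rw [hnil, Set.ncard_empty]
  exact n.zero_le

end Glue

/-- gluing wide trees over `BN_n(T)` yields a wide tree `S ⊆_n T`
with `S↾_u = T_u`. -/
theorem stmt4 (T : Set (List W1)) (hT : Wide T) (n : ℕ)
    (Tu : List W1 → Set (List W1))
    (hWide : ∀ u ∈ BNn T n, Wide (Tu u))
    (hSub : ∀ u ∈ BNn T n, Tu u ⊆ restr T u) :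
    Wide (⋃ u ∈ BNn T n, Tu u) ∧ SubN (⋃ u ∈ BNn T n, Tu u) T n ∧
      ∀ u ∈ BNn T n, restr (⋃ u ∈ BNn T n, Tu u) u = Tu u :=
  ⟨wide_glue hT hWide hSub, ⟨BNn_subset_glue hWide hSub, glue_subset hSub⟩,
    fun _ hu => restr_glue hWide hSub hu⟩

end
end

section
/- Let P be a WT-forcing (a nonempty set of wide trees closed under restrictions T ↦ T↾_u), and for each n < ω let D_n ⊆ P be pre-dense in P. Then for any S₀ ∈ P there is a wide tree T ⊆ S₀ (not necessarily in P) such that for every n, every s ∈ BN_n(T) satisfies T↾ₛ ⊆ S for some S ∈ D_n. -/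
noncomputable section

/-- A WT-forcing: a nonempty set of wide trees closed under restrictions. -/
def WTForcing (P : Set (Set (List W1))) : Prop :=
  P.Nonempty ∧ (∀ T ∈ P, Wide T) ∧ ∀ T ∈ P, ∀ u ∈ T, restr T u ∈ P

/-- `D` is dense in `P`: every member of `P` has a subtree in `D`. -/
def DenseIn (D P : Set (Set (List W1))) : Prop := ∀ S ∈ P, ∃ T ∈ D, T ⊆ S

/-- `D` is pre-dense in `P`: the set of conditions below some element of `D`
is dense in `P`. -/
def PreDenseIn (D P : Set (Set (List W1))) : Prop :=
  DenseIn {S | S ∈ P ∧ ∃ T ∈ D, S ⊆ T} P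

/-!
Fusion. Index the branching nodes of the new tree by finite sequences `σ` of countable
ordinals, choosing along the way conditions `cond σ ∈ P` with a branching node `stem σ`. The
ℵ₁ immediate successors of `stem σ` in `cond σ` are enumerated by `α < ω₁`; for the `α`-th one
`u`, pre-density refines `restr (cond σ) u` to `cond (α :: σ)`, below a member of
`D (|σ| + 1)`, and any branching node of `cond (α :: σ)` extends `u` and serves as
`stem (α :: σ)`. The initial segments of the stems form a wide tree whose branching nodes are
exactly the stems, with `stem σ ∈ BN_{|σ|}` and the tree above `stem σ` contained in `cond σ`.
-/

theorem List.IsPrefix.eq_of_prefix_of_length_eq {α : Type*} {l₁ l₂ l : List α}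
    (h₁ : l₁ <+: l) (h₂ : l₂ <+: l) (h : l₁.length = l₂.length) : l₁ = l₂ :=
  (List.prefix_of_prefix_length_le h₁ h₂ h.le).eq_of_length h

theorem List.ncard_properSuffixes {α : Type*} (l : List α) :
    {m | m <:+ l ∧ m ≠ l}.ncard = l.length := by
  have himage : {m | m <:+ l ∧ m ≠ l} = (fun k => l.drop (k + 1)) '' ↑(Finset.range l.length) := by
    ext m
    simp only [Set.mem_ofPred_eq, Set.mem_image, Finset.coe_range, Set.mem_Iio]
    constructor
    · rintro ⟨hm, hne⟩
      have hlt : m.length < l.length :=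
        lt_of_le_of_ne hm.length_le fun h => hne (hm.eq_of_length h)
      refine ⟨l.length - m.length - 1, by omega, ?_⟩
      calc l.drop (l.length - m.length - 1 + 1) = l.drop (l.length - m.length) := by
            congr 1; omega
        _ = m := (List.suffix_iff_eq_drop.mp hm).symm
    · rintro ⟨k, hk, rfl⟩
      refine ⟨List.drop_suffix _ _, fun h => ?_⟩
      have := congrArg List.length h
      simp only [List.length_drop] at this
      omega
  have hinj : Set.InjOn (fun k => l.drop (k + 1)) ↑(Finset.range l.length) := by
    intro i hi j hj h
    have := congrArg List.length h
    simp only [Finset.coe_range, Set.mem_Iio, List.length_drop] at hi hj this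
    omega
  rw [himage, hinj.ncard_image, Set.ncard_coe_finset, Finset.card_range]

theorem mk_W1 : Cardinal.mk W1 = Cardinal.aleph 1 := Cardinal.mk_ord_toType _

theorem two_le_aleph_one : 2 ≤ Cardinal.aleph 1 :=
  (Cardinal.natCast_lt_aleph0 (n := 2)).le.trans (Cardinal.aleph0_le_aleph 1)

theorem Wide.nil_mem_s6 {T : Set (List W1)} (hT : Wide T) : [] ∈ T :=
  let ⟨t, ht⟩ := hT.1
  hT.2.1 t ht [] List.nil_prefix

theorem Wide.exists_injective_succs {T : Set (List W1)} (hT : Wide T) {s : List W1}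
    (hs : s ∈ BN T) : ∃ e : W1 → List W1, Function.Injective e ∧ ∀ α, e α ∈ succs T s := by
  obtain ⟨f⟩ := Cardinal.eq.mp (mk_W1.trans (hT.2.2.2 s hs).symm)
  exact ⟨fun α => f α, Subtype.val_injective.comp f.injective, fun α => (f α).2⟩

/-- Two distinct immediate successors of a branching node `s` cannot both be comparable with
`u`, so `s` cannot lie strictly below `u`. -/
theorem prefix_of_mem_BN_of_comparable {S : Set (List W1)} {u s : List W1}
    (hS : ∀ t ∈ S, u <+: t ∨ t <+: u) (hs : s ∈ BN S) : u <+: s := by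
  rcases hS s hs.1 with hus | hsu
  · exact hus
  rcases hsu.length_le.eq_or_lt with hlen | hlt
  · rw [hsu.eq_of_length hlen]
  have hsub : succs S s ⊆ {u.take (s.length + 1)} := by
    rintro x ⟨hxS, -, hlen⟩
    rw [Set.mem_singleton_iff, ← hlen]
    refine List.prefix_iff_eq_take.mp ((hS x hxS).elim (fun hux => ?_) id)
    rw [hux.eq_of_length (by have := hux.length_le; omega)]
  have := (Cardinal.mk_le_mk_of_subset hsub).trans_eq (Cardinal.mk_singleton _)
  exact absurd (hs.2.trans this) (by norm_num)

/-- Stems indexed by finite sequences with the newest index at the head: `succ σ α` is the `α`-th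
immediate extension of `stem σ`, and `stem (α :: σ)` extends it. -/
structure FusionScheme (ι : Type) where
  stem : List ι → List W1
  succ : List ι → ι → List W1
  stem_prefix_succ : ∀ σ α, stem σ <+: succ σ α
  length_succ : ∀ σ α, (succ σ α).length = (stem σ).length + 1
  succ_prefix_stem : ∀ σ α, succ σ α <+: stem (α :: σ)
  succ_injective : ∀ σ, Function.Injective (succ σ)

namespace FusionScheme

variable {ι : Type} (F : FusionScheme ι)

theorem stem_prefix_stem_cons (σ : List ι) (α : ι) : F.stem σ <+: F.stem (α :: σ) :=
  (F.stem_prefix_succ σ α).trans (F.succ_prefix_stem σ α)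

theorem stem_prefix_stem_append (τ σ : List ι) : F.stem σ <+: F.stem (τ ++ σ) := by
  induction τ with
  | nil => exact List.prefix_rfl
  | cons β τ ih => exact ih.trans (F.stem_prefix_stem_cons _ β)

theorem stem_prefix_stem_of_suffix {σ σ' : List ι} (h : σ <:+ σ') : F.stem σ <+: F.stem σ' := by
  obtain ⟨τ, rfl⟩ := h
  exact F.stem_prefix_stem_append τ σ

theorem cons_suffix_of_succ_prefix_stem_of_suffix {ρ σ : List ι} {α : ι} (hρ : ρ <:+ σ)
    (h : F.succ ρ α <+: F.stem σ) : α :: ρ <:+ σ := by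
  obtain ⟨τ, rfl⟩ := hρ
  rcases τ.eq_nil_or_concat with rfl | ⟨τ, β, rfl⟩
  · have := h.length_le
    simp only [List.nil_append, F.length_succ] at this
    omega
  · simp only [List.concat_eq_append, List.append_assoc, List.singleton_append] at h ⊢
    have hβ : F.succ ρ β <+: F.stem (τ ++ β :: ρ) :=
      (F.succ_prefix_stem ρ β).trans (F.stem_prefix_stem_append τ _)
    obtain rfl : α = β := F.succ_injective ρ
      (h.eq_of_prefix_of_length_eq hβ (by simp only [F.length_succ]))
    exact List.suffix_append τ _

theorem suffix_of_stem_prefix_stem {σ σ' : List ι} (h : F.stem σ <+: F.stem σ') : σ <:+ σ' := by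
  induction σ with
  | nil => exact List.nil_suffix
  | cons α ρ ih =>
    exact F.cons_suffix_of_succ_prefix_stem_of_suffix (ih ((F.stem_prefix_stem_cons ρ α).trans h))
      ((F.succ_prefix_stem ρ α).trans h)

theorem cons_suffix_of_succ_prefix_stem {ρ σ : List ι} {α : ι} (h : F.succ ρ α <+: F.stem σ) :
    α :: ρ <:+ σ :=
  F.cons_suffix_of_succ_prefix_stem_of_suffix
    (F.suffix_of_stem_prefix_stem ((F.stem_prefix_succ ρ α).trans h)) h

theorem stem_injective : Function.Injective F.stem := fun _ _ h =>
  have h₁ := F.suffix_of_stem_prefix_stem (h ▸ List.prefix_rfl)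
  have h₂ := F.suffix_of_stem_prefix_stem (h ▸ List.prefix_rfl)
  h₁.eq_of_length (h₁.length_le.antisymm h₂.length_le)

theorem prefix_stem_or_succ_prefix {t : List W1} {σ : List ι} {α : ι}
    (h : t <+: F.stem (α :: σ)) : t <+: F.stem σ ∨ F.succ σ α <+: t := by
  rcases le_or_gt t.length (F.stem σ).length with hle | hlt
  · exact .inl (List.prefix_of_prefix_length_le h (F.stem_prefix_stem_cons σ α) hle)
  · exact .inr (List.prefix_of_prefix_length_le (F.succ_prefix_stem σ α) h
      (by rw [F.length_succ]; omega))

def tree : Set (List W1) := {t | ∃ σ, t <+: F.stem σ}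

theorem isTree_tree : IsTree F.tree := fun _ ⟨σ, hσ⟩ _ ht => ⟨σ, ht.trans hσ⟩

theorem stem_mem_tree (σ : List ι) : F.stem σ ∈ F.tree := ⟨σ, List.prefix_rfl⟩

theorem succs_tree_stem (σ : List ι) : succs F.tree (F.stem σ) = Set.range (F.succ σ) := by
  ext t
  constructor
  · rintro ⟨⟨σ', htσ'⟩, hσt, hlen⟩
    obtain ⟨τ, rfl⟩ := F.suffix_of_stem_prefix_stem (hσt.trans htσ')
    rcases τ.eq_nil_or_concat with rfl | ⟨τ, β, rfl⟩
    · have := htσ'.length_le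
      simp only [List.nil_append] at this
      omega
    · simp only [List.concat_eq_append, List.append_assoc, List.singleton_append] at htσ'
      have hβ : F.succ σ β <+: F.stem (τ ++ β :: σ) :=
        (F.succ_prefix_stem σ β).trans (F.stem_prefix_stem_append τ _)
      exact ⟨β, hβ.eq_of_prefix_of_length_eq htσ' (by rw [F.length_succ, hlen])⟩
  · rintro ⟨α, rfl⟩
    exact ⟨⟨α :: σ, F.succ_prefix_stem σ α⟩, F.stem_prefix_succ σ α, F.length_succ σ α⟩

/-- Why non-stems do not branch: every immediate successor of `t` lies below the stem `σ₀`
found here, and these stems are linearly ordered. -/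
theorem exists_stem_of_prefix_stem {t u : List W1} (ht : t ∉ Set.range F.stem) (htu : t <+: u)
    (hu : u.length = t.length + 1) {σ : List ι} (huσ : u <+: F.stem σ) :
    ∃ σ₀, u <+: F.stem σ₀ ∧ ∀ σ', t <+: F.stem σ' → σ₀ <:+ σ' := by
  induction σ with
  | nil => exact ⟨[], huσ, fun _ _ => List.nil_suffix⟩
  | cons α ρ ih =>
    refine (F.prefix_stem_or_succ_prefix huσ).elim ih fun hsu => ⟨α :: ρ, huσ, fun σ' htσ' => ?_⟩
    refine F.cons_suffix_of_succ_prefix_stem (List.IsPrefix.trans ?_ htσ')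
    refine List.prefix_of_prefix_length_le hsu htu (not_lt.mp fun hlt => ht ⟨ρ, ?_⟩)
    have hsu_eq : F.succ ρ α = u := hsu.eq_of_length (by have := hsu.length_le; omega)
    exact (F.stem_prefix_succ ρ α).eq_of_prefix_of_length_eq (hsu_eq ▸ htu)
      (by have := F.length_succ ρ α; rw [hsu_eq] at this; omega)

theorem succs_tree_subsingleton {t : List W1} (ht : t ∉ Set.range F.stem) :
    (succs F.tree t).Subsingleton := by
  rintro u₁ ⟨⟨σ₁, h₁⟩, htu₁, hl₁⟩ u₂ ⟨⟨σ₂, h₂⟩, htu₂, hl₂⟩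
  obtain ⟨ρ₁, hu₁, hρ₁⟩ := F.exists_stem_of_prefix_stem ht htu₁ hl₁ h₁
  obtain ⟨ρ₂, hu₂, -⟩ := F.exists_stem_of_prefix_stem ht htu₂ hl₂ h₂
  have hρ : ρ₁ <:+ ρ₂ := hρ₁ ρ₂ (htu₂.trans hu₂)
  exact (hu₁.trans (F.stem_prefix_stem_of_suffix hρ)).eq_of_prefix_of_length_eq hu₂ (by omega)

theorem BN_tree_subset : BN F.tree ⊆ Set.range F.stem := fun t ht => by
  by_contra hns
  have := ht.2.trans (Cardinal.mk_le_one_iff_set_subsingleton.mpr (F.succs_tree_subsingleton hns))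
  norm_num at this

theorem mk_succs_tree_stem (σ : List ι) :
    Cardinal.mk (succs F.tree (F.stem σ)) = Cardinal.mk ι := by
  rw [F.succs_tree_stem, Cardinal.mk_range_eq _ (F.succ_injective σ)]

theorem stem_mem_BN_tree (hι : 2 ≤ Cardinal.mk ι) (σ : List ι) : F.stem σ ∈ BN F.tree :=
  ⟨F.stem_mem_tree σ, (F.mk_succs_tree_stem σ).symm ▸ hι⟩

theorem wide_tree (hι : Cardinal.mk ι = Cardinal.aleph 1) : Wide F.tree := by
  have hι₂ : 2 ≤ Cardinal.mk ι := hι ▸ two_le_aleph_one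
  refine ⟨⟨_, F.stem_mem_tree []⟩, F.isTree_tree,
    fun _ ⟨σ, hσ⟩ => ⟨_, F.stem_mem_BN_tree hι₂ σ, hσ⟩, fun _ hs => ?_⟩
  obtain ⟨σ, rfl⟩ := F.BN_tree_subset hs
  rw [F.mk_succs_tree_stem, hι]

theorem belowBN_tree_stem (hι : 2 ≤ Cardinal.mk ι) (σ : List ι) :
    belowBN F.tree (F.stem σ) = F.stem '' {ρ | ρ <:+ σ ∧ ρ ≠ σ} := by
  ext u
  constructor
  · rintro ⟨hu, hpre, hne⟩
    obtain ⟨ρ, rfl⟩ := F.BN_tree_subset hu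
    exact ⟨ρ, ⟨F.suffix_of_stem_prefix_stem hpre, fun h => hne (h ▸ rfl)⟩, rfl⟩
  · rintro ⟨ρ, ⟨hρ, hne⟩, rfl⟩
    exact ⟨F.stem_mem_BN_tree hι ρ, F.stem_prefix_stem_of_suffix hρ,
      fun h => hne (F.stem_injective h)⟩

theorem exists_eq_stem_of_mem_BNn (hι : 2 ≤ Cardinal.mk ι) {n : ℕ} {s : List W1}
    (hs : s ∈ BNn F.tree n) : ∃ σ : List ι, σ.length = n ∧ F.stem σ = s := by
  obtain ⟨σ, rfl⟩ := F.BN_tree_subset hs.1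
  refine ⟨σ, ?_, rfl⟩
  rw [← hs.2.2, F.belowBN_tree_stem hι, Set.ncard_image_of_injective _ F.stem_injective,
    List.ncard_properSuffixes]

end FusionScheme

theorem PreDenseIn.exists_branching_refinement {P D : Set (Set (List W1))} (hP : WTForcing P)
    (hD : PreDenseIn D P) {S : Set (List W1)} (hS : S ∈ P) {u : List W1} (hu : u ∈ S) :
    ∃ S' ∈ P, ∃ s ∈ BN S', S' ⊆ restr S u ∧ u <+: s ∧ ∃ U ∈ D, S' ⊆ U := by
  obtain ⟨S', ⟨hS'P, U, hU, hS'U⟩, hS'S⟩ := hD _ (hP.2.2 S hS u hu)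
  have hS'wide := hP.2.1 S' hS'P
  obtain ⟨s, hs, -⟩ := hS'wide.2.2.1 [] hS'wide.nil_mem_s6
  exact ⟨S', hS'P, s, hs, hS'S, prefix_of_mem_BN_of_comparable (fun t ht => (hS'S ht).2) hs,
    U, hU, hS'U⟩

structure FusionSequence (D : ℕ → Set (Set (List W1))) (S₀ : Set (List W1))
    extends FusionScheme W1 where
  cond : List W1 → Set (List W1)
  isTree_cond : ∀ σ, IsTree (cond σ)
  stem_mem_cond : ∀ σ, stem σ ∈ cond σ
  cond_nil_subset : cond [] ⊆ S₀
  cond_cons_subset : ∀ σ α, cond (α :: σ) ⊆ cond σ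
  exists_mem_D : ∀ σ, ∃ U ∈ D σ.length, cond σ ⊆ U

namespace FusionSequence

variable {D : ℕ → Set (Set (List W1))} {S₀ : Set (List W1)} (F : FusionSequence D S₀)

theorem cond_subset_of_suffix {σ σ' : List W1} (h : σ <:+ σ') : F.cond σ' ⊆ F.cond σ := by
  obtain ⟨τ, rfl⟩ := h
  induction τ with
  | nil => exact subset_rfl
  | cons β τ ih => exact (F.cond_cons_subset _ β).trans ih

theorem mem_cond_of_prefix_stem {t : List W1} {σ : List W1} (h : t <+: F.stem σ) :
    t ∈ F.cond σ :=
  F.isTree_cond σ _ (F.stem_mem_cond σ) t h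

theorem tree_subset : F.tree ⊆ S₀ := fun _ ⟨_, h⟩ =>
  F.cond_nil_subset (F.cond_subset_of_suffix List.nil_suffix (F.mem_cond_of_prefix_stem h))

theorem restr_tree_stem_subset (σ : List W1) : restr F.tree (F.stem σ) ⊆ F.cond σ := by
  rintro t ⟨⟨σ', htσ'⟩, hσt | htσ⟩
  · exact F.cond_subset_of_suffix (F.suffix_of_stem_prefix_stem (hσt.trans htσ'))
      (F.mem_cond_of_prefix_stem htσ')
  · exact F.mem_cond_of_prefix_stem htσ

end FusionSequence

theorem exists_fusionSequence {P : Set (Set (List W1))} {D : ℕ → Set (Set (List W1))}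
    {S₀ : Set (List W1)} (hP : WTForcing P) (hD : ∀ n, PreDenseIn (D n) P) (hS₀ : S₀ ∈ P) :
    Nonempty (FusionSequence D S₀) := by
  let Pointed := {p : Set (List W1) × List W1 // p.1 ∈ P ∧ p.2 ∈ BN p.1}
  have exists_refinement (n : ℕ) {S : Set (List W1)} (hS : S ∈ P) {u : List W1} (hu : u ∈ S) :
      ∃ q : Pointed, q.1.1 ⊆ restr S u ∧ u <+: q.1.2 ∧ ∃ U ∈ D n, q.1.1 ⊆ U := by
    obtain ⟨S', hS', s, hs, h⟩ := (hD n).exists_branching_refinement hP hS hu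
    exact ⟨⟨(S', s), hS', hs⟩, h⟩
  choose enum henum_inj henum_mem using
    fun p : Pointed => (hP.2.1 _ p.2.1).exists_injective_succs p.2.2
  choose next hnext using fun n (p : Pointed) α => exists_refinement n p.2.1 (henum_mem p α).1
  obtain ⟨q₀, hq₀⟩ := exists_refinement 0 hS₀ (hP.2.1 S₀ hS₀).nil_mem_s6
  let stage : List W1 → Pointed := fun σ => σ.rec q₀ fun α σ p => next (σ.length + 1) p α
  exact ⟨{
    stem σ := (stage σ).1.2
    succ σ := enum (stage σ)
    stem_prefix_succ σ α := (henum_mem _ α).2.1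
    length_succ σ α := (henum_mem _ α).2.2
    succ_prefix_stem σ α := (hnext _ (stage σ) α).2.1
    succ_injective σ := henum_inj (stage σ)
    cond σ := (stage σ).1.1
    isTree_cond σ := (hP.2.1 _ (stage σ).2.1).2.1
    stem_mem_cond σ := (stage σ).2.2.1
    cond_nil_subset _ ht := (hq₀.1 ht).1
    cond_cons_subset σ α _ ht := ((hnext _ (stage σ) α).1 ht).1
    exists_mem_D σ := by
      cases σ
      exacts [hq₀.2.2, (hnext _ _ _).2.2] }⟩

/-- fusion through countably many pre-dense sets. -/
theorem stmt6 (P : Set (Set (List W1))) (hP : WTForcing P)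
    (D : ℕ → Set (Set (List W1))) (hD : ∀ n, D n ⊆ P ∧ PreDenseIn (D n) P)
    (S₀ : Set (List W1)) (hS₀ : S₀ ∈ P) :
    ∃ T : Set (List W1), Wide T ∧ T ⊆ S₀ ∧
      ∀ n, ∀ s ∈ BNn T n, ∃ S ∈ D n, restr T s ⊆ S := by
  obtain ⟨F⟩ := exists_fusionSequence hP (fun n => (hD n).2) hS₀
  refine ⟨F.tree, F.wide_tree mk_W1, F.tree_subset, fun n s hs => ?_⟩
  obtain ⟨σ, rfl, rfl⟩ := F.exists_eq_stem_of_mem_BNn (mk_W1 ▸ two_le_aleph_one) hs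
  obtain ⟨U, hU, hσU⟩ := F.exists_mem_D σ
  exact ⟨U, hU, (F.restr_tree_stem_subset σ).trans hσU⟩
end
end

section
/- If J is an iteration of wide trees, then its wrap wr(J) is a wide tree, the core C = dom J is contained in wr(J), and for every s ∈ C: s ⊆ stem(J(s)), wr(J)↾ₛ ⊆ J(s), and succ_{wr(J)}(s) = succ_{J(s)}(s). -/
noncomputable section

/-- An iteration of wide trees with core (domain) `C`. -/
def IsIteration (C : Set (List W1)) (J : List W1 → Set (List W1)) : Prop :=
  IsTree C ∧ (∀ u ∈ C, Wide (J u)) ∧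
  (∀ u ∈ C, ∀ v ∈ C, u <+: v → v ∈ J u ∧ J v ⊆ restr (J u) v) ∧
  (∀ u ∈ C, ∀ v ∈ C, u <+: v → v.length = u.length + 1 → u ∉ BN (J u) → J v = J u)

/-- The wrap of an iteration. -/
def wrap (C : Set (List W1)) (J : List W1 → Set (List W1)) : Set (List W1) :=
  {s | ∀ u ∈ C, (u <+: s ∧ u ≠ s) → s ∈ J u}

/-! Let `u` be the longest prefix of `s` lying in the core. Then `s ∈ wr(J)` iff `s ∈ J(u)`, and
`s` has the same immediate successors in `wr(J)` and in `J(u)`, so branching nodes of `wr(J)` are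
branching in `J(u)` and hence `ℵ₁`-branching. To extend `s` to a branching node of `wr(J)`, pick
a branching node `t ⊇ s` of `J(u)`. If `u ≠ s`, no core node passes through `s`, so `u` is also
the longest core prefix of `t` and we are done. If `u = s`, choose `t` of minimal length: along
the core between `s` and `t` no node branches in `J(s)`, so by clause (2) the iteration is
constant there. -/

theorem List.IsPrefix.length_lt_of_ne_s9 {α : Type*} {l₁ l₂ : List α} (h : l₁ <+: l₂)
    (hne : l₁ ≠ l₂) : l₁.length < l₂.length :=
  lt_of_le_of_ne h.length_le fun e => hne (h.eq_of_length e)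

theorem nil_mem_wrap (C : Set (List W1)) (J : List W1 → Set (List W1)) : [] ∈ wrap C J :=
  fun _ _ h => absurd (List.eq_nil_of_prefix_nil h.1) h.2

theorem wrap_empty (J : List W1 → Set (List W1)) : wrap ∅ J = Set.univ :=
  Set.eq_univ_of_forall fun _ _ hu => absurd hu (Set.notMem_empty _)

theorem mk_succs_univ (s : List W1) :
    Cardinal.mk (succs Set.univ s) = Cardinal.aleph 1 := by
  have hrange : succs Set.univ s = Set.range fun a : W1 => s ++ [a] := by
    ext t
    simp only [succs, Set.mem_univ, true_and, Set.mem_range]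
    constructor
    · rintro ⟨⟨r, rfl⟩, hlen⟩
      obtain ⟨a, rfl⟩ := List.length_eq_one_iff.mp (by simpa using hlen)
      exact ⟨a, rfl⟩
    · rintro ⟨a, rfl⟩
      exact ⟨List.prefix_append _ _, by simp⟩
  rw [hrange, Cardinal.mk_range_eq _ fun a b h => List.singleton_inj.mp (List.append_cancel_left h),
    Cardinal.mk_ord_toType]

theorem wide_univ : Wide (Set.univ : Set (List W1)) := by
  have hBN (s : List W1) : s ∈ BN Set.univ := by
    refine ⟨Set.mem_univ s, ?_⟩
    rw [mk_succs_univ]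
    exact Cardinal.ofNat_le_aleph0.trans (Cardinal.aleph0_le_aleph 1)
  exact ⟨⟨[], Set.mem_univ _⟩, fun _ _ _ _ => Set.mem_univ _,
    fun s _ => ⟨s, hBN s, List.prefix_rfl⟩, fun s _ => mk_succs_univ s⟩

def IsLongestPrefixIn (C : Set (List W1)) (u s : List W1) : Prop :=
  u ∈ C ∧ u <+: s ∧ ∀ v ∈ C, v <+: s → v <+: u

section

variable {C : Set (List W1)} {J : List W1 → Set (List W1)} {s t u v : List W1}

theorem IsTree.exists_isLongestPrefixIn (hC : IsTree C) (hne : C.Nonempty) (s : List W1) :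
    ∃ u, IsLongestPrefixIn C u s := by
  classical
  obtain ⟨w, hw⟩ := hne
  have hnil : s.take 0 ∈ C := hC w hw _ List.nil_prefix
  refine ⟨s.take (Nat.findGreatest (fun n => s.take n ∈ C) s.length),
    Nat.findGreatest_spec (P := fun n => s.take n ∈ C) (Nat.zero_le _) hnil, List.take_prefix _ _,
    fun v hv hvs => List.prefix_take_iff.mpr ⟨hvs, ?_⟩⟩
  rw [List.prefix_iff_eq_take.mp hvs] at hv
  exact Nat.le_findGreatest hvs.length_le hv

theorem IsLongestPrefixIn.of_prefix (h : IsLongestPrefixIn C u s) (hC : IsTree C) (hus : u ≠ s)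
    (hst : s <+: t) : IsLongestPrefixIn C u t := by
  obtain ⟨hu, hus', hmax⟩ := h
  have hlt := hus'.length_lt_of_ne_s9 hus
  refine ⟨hu, hus'.trans hst, fun v hv hvt => ?_⟩
  by_cases hvs : v.length ≤ s.length
  · exact hmax v hv (List.prefix_of_prefix_length_le hvt hst hvs)
  · have hc : v.take (u.length + 1) <+: u :=
      hmax _ (hC v hv _ (List.take_prefix _ _))
        (List.prefix_of_prefix_length_le ((List.take_prefix _ _).trans hvt) hst
          (by simp only [List.length_take]; omega))
    have := hc.length_le
    simp only [List.length_take] at this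
    omega

namespace IsIteration

theorem subset_of_prefix (hJ : IsIteration C J) (hu : u ∈ C) (hv : v ∈ C) (huv : u <+: v) :
    J v ⊆ J u :=
  fun _ ht => ((hJ.2.2.1 u hu v hv huv).2 ht).1

theorem mem_self (hJ : IsIteration C J) (hs : s ∈ C) : s ∈ J s :=
  (hJ.2.2.1 s hs s hs List.prefix_rfl).1

theorem subset_wrap (hJ : IsIteration C J) : C ⊆ wrap C J :=
  fun s hs u hu h => (hJ.2.2.1 u hu s hs h.1).1

theorem isTree_wrap (hJ : IsIteration C J) : IsTree (wrap C J) := by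
  intro s hs t hts u hu ⟨hut, hne⟩
  rcases eq_or_ne u s with rfl | hus
  · exact absurd (hut.eq_of_length (le_antisymm hut.length_le hts.length_le)) hne
  · exact (hJ.2.1 u hu).2.1 s (hs u hu ⟨hut.trans hts, hus⟩) t hts

theorem mem_of_mem_wrap (hJ : IsIteration C J) (hu : u ∈ C) (hus : u <+: s)
    (hs : s ∈ wrap C J) : s ∈ J u := by
  rcases eq_or_ne u s with rfl | hne
  · exact hJ.mem_self hu
  · exact hs u hu ⟨hus, hne⟩

theorem mem_wrap_of_mem (hJ : IsIteration C J) (hu : u ∈ C)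
    (hmax : ∀ v ∈ C, v <+: t → v ≠ t → v <+: u) (ht : t ∈ J u) : t ∈ wrap C J :=
  fun v hv hvt => hJ.subset_of_prefix hv hu (hmax v hv hvt.1 hvt.2) ht

theorem mem_wrap_iff (hJ : IsIteration C J) (h : IsLongestPrefixIn C u s) :
    s ∈ wrap C J ↔ s ∈ J u :=
  ⟨hJ.mem_of_mem_wrap h.1 h.2.1, hJ.mem_wrap_of_mem h.1 fun v hv hvs _ => h.2.2 v hv hvs⟩

theorem succs_wrap_eq (hJ : IsIteration C J) (h : IsLongestPrefixIn C u s) :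
    succs (wrap C J) s = succs (J u) s := by
  ext t
  simp only [succs, Set.mem_ofPred_eq, and_congr_left_iff]
  rintro ⟨hst, hlen⟩
  refine ⟨hJ.mem_of_mem_wrap h.1 (h.2.1.trans hst),
    hJ.mem_wrap_of_mem h.1 fun v hv hvt hne => h.2.2 v hv ?_⟩
  have := hvt.length_lt_of_ne_s9 hne
  exact List.prefix_of_prefix_length_le hvt hst (by omega)

theorem mem_BN_wrap (hJ : IsIteration C J) (h : IsLongestPrefixIn C u s) (hs : s ∈ BN (J u)) :
    s ∈ BN (wrap C J) :=
  ⟨(hJ.mem_wrap_iff h).2 hs.1, hJ.succs_wrap_eq h ▸ hs.2⟩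

theorem eq_of_forall_notMem_BN (hJ : IsIteration C J) (hu : u ∈ C) (hv : v ∈ C) (huv : u <+: v)
    (hnb : ∀ w ∈ C, u <+: w → w <+: v → w ≠ v → w ∉ BN (J u)) : J v = J u := by
  induction v using List.reverseRecOn with
  | nil => rw [List.eq_nil_of_prefix_nil huv]
  | append_singleton w a ih =>
    rcases List.prefix_concat_iff.mp huv with rfl | huw
    · rfl
    have hw : w ∈ C := hJ.1 _ hv w (List.prefix_append w [a])
    have hwv : w <+: w ++ [a] := List.prefix_append w [a]
    have hJw : J w = J u := ih hw huw fun x hx hux hxw hne => hnb x hx hux (hxw.trans hwv)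
      fun e => by simpa [e] using (hxw.length_lt_of_ne_s9 hne)
    rw [hJ.2.2.2 w hw _ hv hwv (by simp) (hJw ▸ hnb w hw huw hwv (by simp)), hJw]

theorem exists_mem_BN_wrap (hJ : IsIteration C J) (hne : C.Nonempty) (hs : s ∈ wrap C J) :
    ∃ t ∈ BN (wrap C J), s <+: t := by
  obtain ⟨u, hmax⟩ := hJ.1.exists_isLongestPrefixIn hne s
  have hsu : s ∈ J u := (hJ.mem_wrap_iff hmax).1 hs
  rcases eq_or_ne u s with rfl | hus
  · obtain ⟨t, ⟨htB, hut⟩, hmin⟩ := (measure List.length).wf.has_min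
      {t | t ∈ BN (J u) ∧ u <+: t} ((hJ.2.1 u hmax.1).2.2.1 u hsu)
    obtain ⟨v, hv⟩ := hJ.1.exists_isLongestPrefixIn hne t
    have hJv : J v = J u := hJ.eq_of_forall_notMem_BN hmax.1 hv.1 (hv.2.2 u hmax.1 hut)
      fun w _ huw hwv hne hwB => hmin w ⟨hwB, huw⟩
        (lt_of_lt_of_le (hwv.length_lt_of_ne_s9 hne) hv.2.1.length_le)
    exact ⟨t, hJ.mem_BN_wrap hv (hJv ▸ htB), hut⟩
  · obtain ⟨t, htB, hst⟩ := (hJ.2.1 u hmax.1).2.2.1 s hsu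
    exact ⟨t, hJ.mem_BN_wrap (hmax.of_prefix hJ.1 hus hst) htB, hst⟩

theorem wide_wrap (hJ : IsIteration C J) : Wide (wrap C J) := by
  rcases C.eq_empty_or_nonempty with rfl | hne
  · exact wrap_empty J ▸ wide_univ
  refine ⟨⟨[], nil_mem_wrap C J⟩, hJ.isTree_wrap, fun s hs => hJ.exists_mem_BN_wrap hne hs,
    fun s hs => ?_⟩
  obtain ⟨u, hmax⟩ := hJ.1.exists_isLongestPrefixIn hne s
  have hsu : s ∈ BN (J u) := ⟨(hJ.mem_wrap_iff hmax).1 hs.1, hJ.succs_wrap_eq hmax ▸ hs.2⟩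
  rw [hJ.succs_wrap_eq hmax]
  exact (hJ.2.1 u hmax.1).2.2.2 s hsu

theorem restr_self (hJ : IsIteration C J) (hs : s ∈ C) : restr (J s) s = J s := by
  refine Set.Subset.antisymm (fun _ ht => ht.1) fun t ht => ⟨ht, ?_⟩
  have hd : s.dropLast ∈ C := hJ.1 s hs _ (List.dropLast_prefix s)
  exact ((hJ.2.2.1 _ hd s hs (List.dropLast_prefix s)).2 ht).2

theorem restr_wrap_subset (hJ : IsIteration C J) (hs : s ∈ C) : restr (wrap C J) s ⊆ J s := by
  rintro t ⟨htw, hst | hts⟩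
  · exact hJ.mem_of_mem_wrap hs hst htw
  · exact (hJ.2.1 s hs).2.1 s (hJ.mem_self hs) t hts

end IsIteration

end

/-- the wrap of an iteration is a wide tree containing the core,
and for `s ∈ C`: `s ⊆ stem(J(s))` (i.e. `J(s)↾ₛ = J(s)`), `wr(J)↾ₛ ⊆ J(s)`,
and `succ_{wr(J)}(s) = succ_{J(s)}(s)`. -/
theorem stmt9 (C : Set (List W1)) (J : List W1 → Set (List W1))
    (hJ : IsIteration C J) :
    Wide (wrap C J) ∧ C ⊆ wrap C J ∧
      ∀ s ∈ C, restr (J s) s = J s ∧ restr (wrap C J) s ⊆ J s ∧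
        succs (wrap C J) s = succs (J s) s :=
  ⟨hJ.wide_wrap, hJ.subset_wrap, fun _ hs => ⟨hJ.restr_self hs, hJ.restr_wrap_subset hs,
    hJ.succs_wrap_eq ⟨hs, List.prefix_rfl, fun _ _ h => h⟩⟩⟩

end
end

section
/- Let M be a transitive set, P ∈ M a WT-forcing, and Q a WT-forcing which is an M-extension of P (P ⊏_M Q). If trees T, T' ∈ P are incompatible in P (no S ∈ P with S ⊆ T and S ⊆ T'), then T, T' remain incompatible in P ∪ Q, provided M models enough set theory (ZFC without power set plus existence of ω₁ and P(ω₁)) and contains the relevant dense sets; specifically it suffices that condition (C) of the extension holds: for every pre-dense D ∈ M, D ⊆ P and every U ∈ Q, the set D↑U = {s ∈ U : ∃S ∈ D (U↾ₛ ⊆ S)} weakly covers U. -/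
noncomputable section

/-- `H` meets the infinite sequence `x`. -/
def Meets (H : Set (List W1)) (x : ℕ → W1) : Prop := ∃ m, seg x m ∈ H

/-- `H` weakly covers `T` with parameter `β`: `H` meets every branch of `T`
having some term `≥ β`. -/
def WeaklyCovers (H : Set (List W1)) (T : Set (List W1)) (β : W1) : Prop :=
  ∀ x ∈ branches T, (∃ n, β ≤ x n) → Meets H x
/-- `P ⊏ Q`: `Q` is dense in `Q ∪ P` and refines `P`. -/
def ExtWT (P Q : Set (Set (List W1))) : Prop :=
  DenseIn Q (Q ∪ P) ∧ ∀ U ∈ Q, ∃ T ∈ P, U ⊆ T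

/-- `D↑U`: the strings `s ∈ U` whose restriction `U↾ₛ` lies below some member
of `D`. -/
def upArrow (D : Set (Set (List W1))) (U : Set (List W1)) : Set (List W1) :=
  {s ∈ U | ∃ S ∈ D, restr U s ⊆ S}

/-! Suppose `U ∈ Q` lies below both `T` and `T'`. The conditions of `P` deciding both `T` and
`T'` (lying below each, or sharing no branch with it) are pre-dense in `P`, because `P` is closed
under restriction, so condition (C) applies to them. A wide tree has branches with arbitrarily
large entries, hence some branch `x` of `U` meets `D↑U`, which makes `x` a branch of a deciding
`S ∈ P`. As `x` is also a branch of `T` and `T'`, `S` lies below both: they were compatible. -/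

lemma seg_length (x : ℕ → W1) (m : ℕ) : (seg x m).length = m := List.length_ofFn

@[simp]
lemma seg_getElem (x : ℕ → W1) (m i : ℕ) (h : i < (seg x m).length) : (seg x m)[i] = x i := by
  simp [seg]

lemma seg_prefix_seg (x : ℕ → W1) {m k : ℕ} (h : m ≤ k) : seg x m <+: seg x k := by
  rw [List.prefix_iff_eq_take]
  refine List.ext_getElem (by simp [seg_length]; omega) fun i _ _ => ?_
  rw [seg_getElem, List.getElem_take, seg_getElem]

lemma seg_eq_of_prefix_or_prefix {x : ℕ → W1} {s : List W1}
    (h : s <+: seg x s.length ∨ seg x s.length <+: s) : seg x s.length = s := by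
  rcases h with h | h
  · exact (h.eq_of_length (seg_length x s.length).symm).symm
  · exact h.eq_of_length (seg_length x s.length)

lemma branches_mono {S T : Set (List W1)} (h : S ⊆ T) : branches S ⊆ branches T :=
  fun _ hx m => h (hx m)

lemma mem_branches_restr {U : Set (List W1)} {x : ℕ → W1} (hx : x ∈ branches U) (m : ℕ) :
    x ∈ branches (restr U (seg x m)) := fun k =>
  ⟨hx k, (le_total m k).imp (seg_prefix_seg x) (seg_prefix_seg x)⟩

lemma exists_seg_eq_take_of_prefix_chain {f : ℕ → List W1} (hf : ∀ n, f n <+: f (n + 1))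
    (hlen : ∀ n, n ≤ (f n).length) :
    ∃ x : ℕ → W1, ∀ k m, m ≤ (f k).length → seg x m = (f k).take m := by
  have hchain : ∀ m k, m ≤ k → f m <+: f k := fun m k hmk => by
    induction k, hmk using Nat.le_induction with
    | base => exact List.prefix_refl _
    | succ k _ ih => exact ih.trans (hf k)
  refine ⟨fun n => (f (n + 1))[n]'(hlen (n + 1)), fun k m hm => ?_⟩
  have hentry : ∀ n (hn : n < (f k).length), (f (n + 1))[n]'(hlen (n + 1)) = (f k)[n] :=
    fun n hn => (le_total (n + 1) k).elim (fun h => (hchain _ _ h).getElem _)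
      (fun h => ((hchain _ _ h).getElem hn).symm)
  refine List.ext_getElem (by simp [seg_length]; omega) fun i h1 _ => ?_
  rw [seg_getElem, List.getElem_take]
  exact hentry i (by rw [seg_length] at h1; omega)

namespace Wide

variable {S : Set (List W1)} (hS : Wide S)
include hS

lemma exists_prefix_length_lt {s : List W1} (hs : s ∈ S) :
    ∃ t ∈ S, s <+: t ∧ s.length < t.length := by
  obtain ⟨b, hb, hsb⟩ := hS.2.2.1 s hs
  obtain ⟨t, ht, hbt, hlen⟩ : (succs S b).Nonempty :=
    Set.nonempty_coe_sort.mp (Cardinal.mk_ne_zero_iff.mp (lt_of_lt_of_le two_pos hb.2).ne')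
  exact ⟨t, ht, hsb.trans hbt, lt_of_le_of_lt hsb.length_le (by omega)⟩

lemma exists_branch {t : List W1} (ht : t ∈ S) : ∃ x ∈ branches S, seg x t.length = t := by
  have hstep : ∀ s : {l // l ∈ S}, ∃ s' : {l // l ∈ S}, s.1 <+: s'.1 ∧ s.1.length < s'.1.length :=
    fun ⟨s, hs⟩ => by
      obtain ⟨s', hs', h⟩ := hS.exists_prefix_length_lt hs
      exact ⟨⟨s', hs'⟩, h⟩
  choose g hg_prefix hg_length using hstep
  let f : ℕ → {l // l ∈ S} := fun n => g^[n] ⟨t, ht⟩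
  have hf_succ : ∀ n, f (n + 1) = g (f n) := fun n => Function.iterate_succ_apply' g n _
  have hf_length : ∀ n, n + t.length ≤ (f n).1.length := fun n => by
    induction n with
    | zero => simp [f]
    | succ n ih => have := hg_length (f n); rw [hf_succ]; omega
  obtain ⟨x, hx⟩ := exists_seg_eq_take_of_prefix_chain (f := fun n => (f n).1)
    (fun n => hf_succ n ▸ hg_prefix (f n)) (fun n => le_trans (by omega) (hf_length n))
  refine ⟨x, fun m => ?_, ?_⟩
  · rw [hx m m (le_trans (by omega) (hf_length m))]
    exact hS.2.1 _ (f m).2 _ (List.take_prefix _ _)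
  · rw [hx 0 t.length le_rfl]
    exact List.take_length

/-- The `ℵ₁` immediate successors of a branching node are told apart by their last entries,
which therefore cannot all lie below a countable ordinal `β`. -/
lemma exists_succs_getElem_ge {b : List W1} (hb : b ∈ BN S) (β : W1) :
    ∃ t ∈ succs S b, ∃ h : b.length < t.length, β ≤ t[b.length] := by
  by_contra! hcon
  have hlt : ∀ t : ↥(succs S b), b.length < t.1.length := fun t => by
    have := t.2.2.2; omega
  have hinj : Cardinal.mk ↥(succs S b) ≤ Cardinal.mk ↥(Set.Iio β) := by
    refine Cardinal.mk_le_of_injective (f := fun t : ↥(succs S b) =>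
      (⟨t.1[b.length]'(hlt t), hcon t.1 t.2 (hlt t)⟩ : Set.Iio β)) ?_
    rintro ⟨t₁, ht₁⟩ ⟨t₂, ht₂⟩ heq
    simp only [Subtype.mk.injEq] at heq ⊢
    refine List.ext_getElem (by rw [ht₁.2.2, ht₂.2.2]) fun i _ _ => ?_
    rcases Nat.lt_or_ge i b.length with h | h
    · rw [← ht₁.2.1.getElem h, ← ht₂.2.1.getElem h]
    · obtain rfl : i = b.length := by have := ht₁.2.2; omega
      exact congrArg Subtype.val heq
  rw [hS.2.2.2 b hb] at hinj
  exact hinj.not_gt ((Cardinal.mk_Iio_lt β (by simp)).trans_eq (Cardinal.mk_ord_toType _))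

lemma exists_branch_ge (β : W1) : ∃ x ∈ branches S, ∃ n, β ≤ x n := by
  obtain ⟨s, hs⟩ := hS.1
  obtain ⟨b, hb, -⟩ := hS.2.2.1 s hs
  obtain ⟨t, ht, hlt, hβ⟩ := hS.exists_succs_getElem_ge hb β
  obtain ⟨x, hx, hxt⟩ := hS.exists_branch ht.1
  refine ⟨x, hx, b.length, ?_⟩
  have := List.getElem_of_eq hxt (i := b.length) (by rw [seg_length]; exact hlt)
  rwa [← this, seg_getElem] at hβ

end Wide

/-- The condition defining the paper's dense set `D(T)`. -/
def Decides (S T : Set (List W1)) : Prop := S ⊆ T ∨ branches S ∩ branches T = ∅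

lemma Decides.anti {S S' T : Set (List W1)} (h : Decides S T) (hS' : S' ⊆ S) : Decides S' T :=
  Or.imp hS'.trans (fun (h : branches S ∩ branches T = ∅) => Set.subset_empty_iff.mp
    (h ▸ Set.inter_subset_inter_left _ (branches_mono hS'))) h

lemma Decides.subset_of_mem_branches {S T : Set (List W1)} (h : Decides S T) {x : ℕ → W1}
    (hxS : x ∈ branches S) (hxT : x ∈ branches T) : S ⊆ T :=
  h.resolve_right (Set.nonempty_iff_ne_empty.mp ⟨x, hxS, hxT⟩)

lemma WTForcing.exists_subset_decides {P : Set (Set (List W1))} (hP : WTForcing P)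
    {R : Set (List W1)} (hR : R ∈ P) (T : Set (List W1)) : ∃ S ∈ P, S ⊆ R ∧ Decides S T := by
  by_cases h : R ⊆ T
  · exact ⟨R, hR, subset_rfl, Or.inl h⟩
  obtain ⟨s, hsR, hsT⟩ := Set.not_subset.mp h
  refine ⟨restr R s, hP.2.2 R hR s hsR, fun t ht => ht.1, Or.inr ?_⟩
  refine Set.eq_empty_of_forall_notMem fun x ⟨hxR, hxT⟩ => hsT ?_
  rw [← seg_eq_of_prefix_or_prefix (hxR s.length).2]
  exact hxT s.length

lemma WTForcing.preDenseIn_decides {P : Set (Set (List W1))} (hP : WTForcing P)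
    (T T' : Set (List W1)) : PreDenseIn {S | S ∈ P ∧ Decides S T ∧ Decides S T'} P := by
  intro R hR
  obtain ⟨S₁, hS₁, hS₁R, h₁⟩ := hP.exists_subset_decides hR T
  obtain ⟨S₂, hS₂, hS₂S₁, h₂⟩ := hP.exists_subset_decides hS₁ T'
  exact ⟨S₂, ⟨hS₂, S₂, ⟨hS₂, h₁.anti hS₂S₁, h₂⟩, subset_rfl⟩, hS₂S₁.trans hS₁R⟩

lemma exists_mem_branches_of_meets_upArrow {D : Set (Set (List W1))} {U : Set (List W1)}
    {x : ℕ → W1} (hx : x ∈ branches U) (hmeets : Meets (upArrow D U) x) :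
    ∃ S ∈ D, x ∈ branches S := by
  obtain ⟨m, -, S, hS, hsub⟩ := hmeets
  exact ⟨S, hS, branches_mono hsub (mem_branches_restr hx m)⟩

theorem stmt16_general (M : Set (Set (Set (List W1)))) (P Q : Set (Set (List W1)))
    (hP : WTForcing P) (hQ : WTForcing Q)
    (hC : ∀ D ∈ M, D ⊆ P → PreDenseIn D P →
      ∀ U ∈ Q, ∃ β : W1, WeaklyCovers (upArrow D U) U β)
    (hrelevant : ∀ T ∈ P, ∀ T' ∈ P,
      {S | S ∈ P ∧ (S ⊆ T ∨ branches S ∩ branches T = ∅) ∧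
        (S ⊆ T' ∨ branches S ∩ branches T' = ∅)} ∈ M)
    (T T' : Set (List W1)) (hT : T ∈ P) (hT' : T' ∈ P)
    (hinc : ¬ ∃ S ∈ P, S ⊆ T ∧ S ⊆ T') :
    ¬ ∃ S ∈ P ∪ Q, S ⊆ T ∧ S ⊆ T' := by
  rintro ⟨U, hU | hU, hUT, hUT'⟩
  · exact hinc ⟨U, hU, hUT, hUT'⟩
  obtain ⟨β, hβ⟩ := hC _ (hrelevant T hT T' hT') (fun _ hS => hS.1)
    (hP.preDenseIn_decides T T') U hU
  obtain ⟨x, hx, hxβ⟩ := (hQ.2.1 U hU).exists_branch_ge β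
  obtain ⟨S, ⟨hS, hST, hST'⟩, hxS⟩ := exists_mem_branches_of_meets_upArrow hx (hβ x hx hxβ)
  exact hinc ⟨S, hS, Decides.subset_of_mem_branches hST hxS (branches_mono hUT hx),
    Decides.subset_of_mem_branches hST' hxS (branches_mono hUT' hx)⟩

/-- incompatibility in `P` is preserved in `P ∪ Q` for an
`M`-extension `Q` of `P`, where `M` (modelling enough set theory) is rendered by
the family of its subsets of `P`, assumed to contain the relevant dense sets
`D(T) ∩ D(T')`, and condition (C) of the extension holds. -/
theorem stmt16 (M : Set (Set (Set (List W1)))) (P Q : Set (Set (List W1)))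
    (hP : WTForcing P) (hQ : WTForcing Q) (hPQ : ExtWT P Q)
    (hC : ∀ D ∈ M, D ⊆ P → PreDenseIn D P →
      ∀ U ∈ Q, ∃ β : W1, WeaklyCovers (upArrow D U) U β)
    (hrelevant : ∀ T ∈ P, ∀ T' ∈ P,
      {S | S ∈ P ∧ (S ⊆ T ∨ branches S ∩ branches T = ∅) ∧
        (S ⊆ T' ∨ branches S ∩ branches T' = ∅)} ∈ M)
    (T T' : Set (List W1)) (hT : T ∈ P) (hT' : T' ∈ P)
    (hinc : ¬ ∃ S ∈ P, S ⊆ T ∧ S ⊆ T') :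
    ¬ ∃ S ∈ P ∪ Q, S ⊆ T ∧ S ⊆ T' :=
  stmt16_general M P Q hP hQ hC hrelevant T T' hT hT' hinc

end
end
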